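/- Let G be a Rabin game on arena A with pairs (U_1, W_1), …, (U_k, W_k), and let X ⊆ V be such that A(X) is a subarena and there exists i ∈ {1, …, k} with X ∩ U_i ≠ ∅ and X ∩ W_i = ∅. Then Player 0 fully wins G(X) if and only if for every Y ⊊ X such that A(Y) is a subarena that is a 0-trap in G(X), Player 0 fully wins G(Y). -/

import Mathlib

/-
Let `T = X ∩ Uᵢ` and let `Z` be Player 0's attractor to `T` inside `A(X)`. Its complement
`X \ Z` is a proper 0-trap of `A(X)` (proper because `T ≠ ∅`), so by hypothesis Player 0 wins
`G(X \ Z)` from every position. Player 0 plays the attractor strategy on `Z` and, inside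
`X \ Z`, the winning strategy of the vertex through which the play last entered `X \ Z`. A play
that eventually stays in `X \ Z` is won because the Rabin condition is prefix-independent; any
other play visits `Z`, hence `T`, infinitely often and never visits `Wᵢ`, so pair `i` is
satisfied. The converse holds because Player 0 cannot leave a 0-trap, so a winning strategy on
`X` restricts to every 0-trap.
-/

open Set

/-- An arena: a finite directed bipartite graph where every vertex has an
outgoing edge.  The vertex set is `V0 ∪ V1` inside the finite type `α`. -/
structure Arena (α : Type) [Fintype α] where
  V0 : Set α
  V1 : Set α
  E : Set (α × α)
  disj : Disjoint V0 V1
  bipartite : E ⊆ (V0 ×ˢ V1) ∪ (V1 ×ˢ V0)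
  succ : ∀ v ∈ V0 ∪ V1, ∃ u, (v, u) ∈ E

variable {α : Type} [Fintype α]

/-- The set of positions of the arena. -/
def Arena.V (A : Arena α) : Set α := A.V0 ∪ A.V1

/-- The positions of Player σ (σ ∈ {0,1}). -/
def Arena.P (A : Arena α) (σ : Fin 2) : Set α := if σ = 0 then A.V0 else A.V1

/-- `A(X)` is a subarena: `X ⊆ V` and every vertex of `X` has an
outgoing edge inside `X`. -/
def Subarena (A : Arena α) (X : Set α) : Prop :=
  X ⊆ A.V ∧ ∀ v ∈ X, ∃ u ∈ X, (v, u) ∈ A.E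

/-- `A(Y)` is a σ-trap of the pseudo-arena `A(X)`: every vertex of
`Y ∩ V_{1-σ}` has an `E`-successor in `Y`, and every vertex of `Y ∩ V_σ`
has all of its `E`-successors inside `X` lying in `Y`.
A σ-trap of `A` itself is `TrapIn A A.V σ Y`. -/
def TrapIn (A : Arena α) (X : Set α) (σ : Fin 2) (Y : Set α) : Prop :=
  Y ⊆ X ∧
  (∀ v ∈ Y ∩ A.P (1 - σ), ∃ u ∈ Y, (v, u) ∈ A.E) ∧
  (∀ v ∈ Y ∩ A.P σ, ∀ u, (v, u) ∈ A.E → u ∈ X → u ∈ Y)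

/-- A play of the (pseudo-)arena `A(X)`: an infinite `E`-path staying in `X`. -/
def IsPlayIn (A : Arena α) (X : Set α) (ρ : ℕ → α) : Prop :=
  ∀ i, ρ i ∈ X ∧ (ρ i, ρ (i + 1)) ∈ A.E

/-- The set of vertices occurring infinitely often in the play `ρ`. -/
def InfOcc (ρ : ℕ → α) : Set α := {v | {i | ρ i = v}.Infinite}

/-- A strategy for Player σ in the game played on the pseudo-arena `A(X)`:
it maps a history (the finite prefix before the current vertex) and the
current vertex of `V_σ ∩ X` to an `E`-successor inside `X`. -/
structure StrategyIn (A : Arena α) (X : Set α) (σ : Fin 2) where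
  move : List α → α → α
  legal : ∀ h v, v ∈ X ∩ A.P σ → (v, move h v) ∈ A.E ∧ move h v ∈ X

/-- A play is consistent with a strategy for Player σ if every move from a
vertex of `V_σ` follows the strategy. -/
def ConsistentIn {A : Arena α} {X : Set α} {σ : Fin 2} (s : StrategyIn A X σ)
    (ρ : ℕ → α) : Prop :=
  ∀ i, ρ i ∈ A.P σ → ρ (i + 1) = s.move (List.ofFn fun j : Fin i => ρ j) (ρ i)

/-- Player σ wins the game on `A(X)` (with payoff `payoff` describing the
plays won by Player 0) from position `v`. -/
def WinsFrom (A : Arena α) (X : Set α) (payoff : (ℕ → α) → Prop) (σ : Fin 2)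
    (v : α) : Prop :=
  ∃ s : StrategyIn A X σ, ∀ ρ, IsPlayIn A X ρ → ρ 0 = v → ConsistentIn s ρ →
    (if σ = 0 then payoff ρ else ¬ payoff ρ)

/-- `Win_σ` of the game on `A(X)`. -/
def WinSet (A : Arena α) (X : Set α) (payoff : (ℕ → α) → Prop) (σ : Fin 2) :
    Set α :=
  {v ∈ X | WinsFrom A X payoff σ v}

/-- Player σ fully wins the game on `A(X)`. -/
def FullyWins (A : Arena α) (X : Set α) (payoff : (ℕ → α) → Prop)
    (σ : Fin 2) : Prop :=
  ∀ v ∈ X, WinsFrom A X payoff σ v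

/-- The attractor `Attr_σ(T, A(X))`: the least `W ⊇ T` containing every
`u ∈ X ∩ V_σ` with some `E`-successor in `W ∩ X` and every
`u ∈ X ∩ V_{1-σ}` all of whose `E`-successors inside `X` lie in `W`. -/
def AttrIn (A : Arena α) (X : Set α) (σ : Fin 2) (T : Set α) : Set α :=
  ⋂₀ {W | T ⊆ W ∧
    (∀ u ∈ X ∩ A.P σ, (∃ w ∈ W ∩ X, (u, w) ∈ A.E) → u ∈ W) ∧
    (∀ u ∈ X ∩ A.P (1 - σ), (∀ w, (u, w) ∈ A.E → w ∈ X → w ∈ W) → u ∈ W)}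

/-- The Müller winning condition: Player 0 wins the play `ρ` iff `Inf(ρ) ∈ Ω`. -/
def MullerPayoff (Ω : Set (Set α)) : (ℕ → α) → Prop := fun ρ => InfOcc ρ ∈ Ω

/-- The Rabin winning condition: Player 0 wins `ρ` iff some pair `(Uᵢ, Wᵢ)`
has `Inf(ρ) ∩ Uᵢ ≠ ∅` and `Inf(ρ) ∩ Wᵢ = ∅`. -/
def RabinPayoff {k : ℕ} (pairs : Fin k → Set α × Set α) : (ℕ → α) → Prop :=
  fun ρ => ∃ i, (InfOcc ρ ∩ (pairs i).1).Nonempty ∧ InfOcc ρ ∩ (pairs i).2 = ∅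

open Filter

section InfOcc

variable {α : Type}

lemma mem_infOcc_iff {ρ : ℕ → α} {v : α} : v ∈ InfOcc ρ ↔ ∃ᶠ i in atTop, ρ i = v :=
  Nat.frequently_atTop_iff_infinite.symm

lemma infOcc_comp_add (ρ : ℕ → α) (N : ℕ) : InfOcc (fun t => ρ (N + t)) = InfOcc ρ := by
  ext v
  rw [mem_infOcc_iff, mem_infOcc_iff]
  conv_rhs => rw [← map_add_atTop_eq_nat N, frequently_map]
  simp only [add_comm N]

lemma infOcc_subset_of_forall_mem {ρ : ℕ → α} {X : Set α} (h : ∀ j, ρ j ∈ X) :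
    InfOcc ρ ⊆ X := fun _ hv =>
  let ⟨i, hi⟩ := (mem_infOcc_iff.1 hv).exists
  hi ▸ h i

lemma inter_infOcc_nonempty_of_frequently [Finite α] {ρ : ℕ → α} {S : Set α}
    (h : ∃ᶠ i in atTop, ρ i ∈ S) : (InfOcc ρ ∩ S).Nonempty := by
  by_contra hS
  have hfin : ∀ v ∈ S, ∀ᶠ i in atTop, ρ i ≠ v := fun v hv =>
    not_frequently.1 fun hv' => hS ⟨v, mem_infOcc_iff.2 hv', hv⟩
  exact h (((eventually_all_finite S.toFinite).2 hfin).mono fun i hi hiS => hi _ hiS rfl)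

end InfOcc

section Rabin

variable {α : Type} {k : ℕ} {pairs : Fin k → Set α × Set α}

lemma rabinPayoff_comp_add {ρ : ℕ → α} (N : ℕ) :
    RabinPayoff pairs (fun t => ρ (N + t)) ↔ RabinPayoff pairs ρ := by
  simp only [RabinPayoff, infOcc_comp_add]

lemma rabinPayoff_of_frequently [Finite α] {X : Set α} {ρ : ℕ → α} {i : Fin k}
    (hρ : ∀ j, ρ j ∈ X) (hW : X ∩ (pairs i).2 = ∅) (h : ∃ᶠ j in atTop, ρ j ∈ (pairs i).1) :
    RabinPayoff pairs ρ :=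
  ⟨i, inter_infOcc_nonempty_of_frequently h,
    subset_empty_iff.1 (hW ▸ inter_subset_inter_left _ (infOcc_subset_of_forall_mem hρ))⟩

end Rabin

namespace List

lemma rtakeWhile_ofFn_add {β : Type*} (p : β → Bool) (ρ : ℕ → β) {N : ℕ}
    (hN : ∀ j ≥ N, p (ρ j)) (hentry : (ofFn fun i : Fin N => ρ i).rtakeWhile p = []) :
    ∀ t, (ofFn fun i : Fin (N + t) => ρ i).rtakeWhile p = ofFn fun i : Fin t => ρ (N + i)
  | 0 => by simpa using hentry
  | t + 1 => by
    rw [ofFn_succ', ofFn_succ', concat_eq_append, concat_eq_append,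
      rtakeWhile_concat_pos _ _ _ (hN _ (by simp))]
    simpa using rtakeWhile_ofFn_add p ρ hN hentry t

lemma exists_rtakeWhile_ofFn_eq_nil {β : Type*} (p : β → Bool) (ρ : ℕ → β)
    (h : ∀ᶠ j in atTop, p (ρ j)) :
    ∃ N, (∀ j ≥ N, p (ρ j)) ∧ (ofFn fun i : Fin N => ρ i).rtakeWhile p = [] := by
  classical
  have hex := eventually_atTop.1 h
  refine ⟨Nat.find hex, Nat.find_spec hex, ?_⟩
  rcases hN : Nat.find hex with _ | M
  · simp
  · rw [ofFn_succ', concat_eq_append, rtakeWhile_concat_neg]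
    intro hM
    refine Nat.find_min hex (m := M) (by omega) fun j hj => ?_
    rcases hj.eq_or_lt with rfl | hj
    · simpa using hM
    · exact Nat.find_spec hex j (by omega)

end List

variable {α : Type} [Fintype α]

namespace Arena

variable (A : Arena α) (σ : Fin 2)

lemma P_union_P_one_sub : A.P σ ∪ A.P (1 - σ) = A.V := by
  fin_cases σ <;> simp [P, V, union_comm]

lemma disjoint_P_one_sub : Disjoint (A.P σ) (A.P (1 - σ)) := by
  fin_cases σ <;> simp [P, A.disj, A.disj.symm]

end Arena

section Strategies

variable {A : Arena α} {X Y : Set α} {σ : Fin 2}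

lemma TrapIn.subarena (hX : Subarena A X) (hY : TrapIn A X σ Y) : Subarena A Y := by
  refine ⟨hY.1.trans hX.1, fun v hv => ?_⟩
  rcases (A.P_union_P_one_sub σ).symm ▸ hX.1 (hY.1 hv) with hσ | hσ
  · obtain ⟨u, hu, he⟩ := hX.2 v (hY.1 hv)
    exact ⟨u, hY.2.2 v ⟨hv, hσ⟩ u he hu, he⟩
  · exact hY.2.1 v ⟨hv, hσ⟩

lemma Subarena.nonempty_strategyIn (hY : Subarena A Y) : Nonempty (StrategyIn A Y σ) := by
  classical
  choose f hfY hfE using hY.2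
  exact ⟨⟨fun _ v => if hv : v ∈ Y then f v hv else v, fun _ v hv => by
    simpa only [dif_pos hv.1] using ⟨hfE v hv.1, hfY v hv.1⟩⟩⟩

lemma WinsFrom.of_trapIn {payoff : (ℕ → α) → Prop} {v : α} (hY : TrapIn A X σ Y)
    (h : WinsFrom A X payoff σ v) : WinsFrom A Y payoff σ v := by
  obtain ⟨s, hs⟩ := h
  refine ⟨⟨s.move, fun h u hu => ?_⟩, fun ρ hρ h0 hcons =>
    hs ρ (fun i => ⟨hY.1 (hρ i).1, (hρ i).2⟩) h0 hcons⟩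
  obtain ⟨hE, hX⟩ := s.legal h u ⟨hY.1 hu.1, hu.2⟩
  exact ⟨hE, hY.2.2 u hu _ hE hX⟩

lemma FullyWins.exists_strategyIn {payoff : (ℕ → α) → Prop} (hY : Subarena A Y)
    (h : FullyWins A Y payoff σ) :
    ∃ s : α → StrategyIn A Y σ, ∀ w ∈ Y, ∀ ρ, IsPlayIn A Y ρ → ρ 0 = w →
      ConsistentIn (s w) ρ → if σ = 0 then payoff ρ else ¬ payoff ρ := by
  have key : ∀ w, ∃ s : StrategyIn A Y σ, w ∈ Y → ∀ ρ, IsPlayIn A Y ρ → ρ 0 = w →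
      ConsistentIn s ρ → if σ = 0 then payoff ρ else ¬ payoff ρ := fun w => by
    by_cases hw : w ∈ Y
    · obtain ⟨s, hs⟩ := h w hw
      exact ⟨s, fun _ => hs⟩
    · exact ⟨Classical.choice hY.nonempty_strategyIn, fun h => absurd h hw⟩
  choose s hs using key
  exact ⟨s, hs⟩

/-- Inside `Y`, follow `s w` for the vertex `w` through which the play last entered `Y`, fed
with the history since that entry; outside `Y`, move by `f`. -/
noncomputable def StrategyIn.glue [DecidablePred (· ∈ Y)] (hYX : Y ⊆ X) (f : α → α)
    (hf : ∀ v ∈ (X \ Y) ∩ A.P σ, (v, f v) ∈ A.E ∧ f v ∈ X) (s : α → StrategyIn A Y σ) :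
    StrategyIn A X σ where
  move h v :=
    let h' := h.rtakeWhile fun x => decide (x ∈ Y)
    if v ∈ Y then (s (h'.headD v)).move h' v else f v
  legal h v hv := by
    dsimp only
    split_ifs with hvY
    · exact ((s _).legal _ v ⟨hvY, hv.2⟩).imp_right fun h => hYX h
    · exact hf v ⟨⟨hv.1, hvY⟩, hv.2⟩

variable [DecidablePred (· ∈ Y)] {hYX : Y ⊆ X} {f : α → α}
  {hf : ∀ v ∈ (X \ Y) ∩ A.P σ, (v, f v) ∈ A.E ∧ f v ∈ X} {s : α → StrategyIn A Y σ}

lemma StrategyIn.glue_move_of_notMem (h : List α) {v : α} (hv : v ∉ Y) :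
    (StrategyIn.glue hYX f hf s).move h v = f v :=
  if_neg hv

lemma ConsistentIn.glue_comp_add {ρ : ℕ → α}
    (hρ : ConsistentIn (StrategyIn.glue hYX f hf s) ρ) {N : ℕ} (hN : ∀ j ≥ N, ρ j ∈ Y)
    (hentry : (List.ofFn fun i : Fin N => ρ i).rtakeWhile (fun x => decide (x ∈ Y)) = []) :
    ConsistentIn (s (ρ N)) (fun t => ρ (N + t)) := by
  intro t ht
  have hsuf := List.rtakeWhile_ofFn_add _ ρ (fun j hj => decide_eq_true (hN j hj)) hentry t
  have hhead : (List.ofFn fun i : Fin t => ρ (N + i)).headD (ρ (N + t)) = ρ N := by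
    cases t <;> simp
  change ρ (N + t + 1) = _
  rw [hρ (N + t) ht]
  simp only [StrategyIn.glue, if_pos (hN _ (Nat.le_add_right N t)), hsuf, hhead]

end Strategies

section Attractor

variable (A : Arena α) (X : Set α) (σ : Fin 2) (T : Set α)

def attrIter : ℕ → Set α
  | 0 => T
  | n + 1 => attrIter n
      ∪ {u | u ∈ X ∩ A.P σ ∧ ∃ w ∈ attrIter n ∩ X, (u, w) ∈ A.E}
      ∪ {u | u ∈ X ∩ A.P (1 - σ) ∧ ∀ w, (u, w) ∈ A.E → w ∈ X → w ∈ attrIter n}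

lemma monotone_attrIter : Monotone (attrIter A X σ T) :=
  monotone_nat_of_le_succ fun _ _ hv => Or.inl (Or.inl hv)

lemma attrIter_succ_cases {n : ℕ} {v : α} (hv : v ∈ attrIter A X σ T (n + 1)) (hvT : v ∉ T) :
    (v ∈ X ∩ A.P σ ∧ ∃ w ∈ attrIter A X σ T n ∩ X, (v, w) ∈ A.E) ∨
      (v ∈ X ∩ A.P (1 - σ) ∧ ∀ w, (v, w) ∈ A.E → w ∈ X → w ∈ attrIter A X σ T n) := by
  induction n with
  | zero =>
    rcases hv with (hv | hv) | hv
    exacts [absurd hv hvT, Or.inl hv, Or.inr hv]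
  | succ n ih =>
    have hmono := monotone_attrIter A X σ T n.le_succ
    rcases hv with (hv | hv) | hv
    · rcases ih hv with ⟨hv, w, hw, he⟩ | ⟨hv, hall⟩
      · exact Or.inl ⟨hv, w, ⟨hmono hw.1, hw.2⟩, he⟩
      · exact Or.inr ⟨hv, fun w he hw => hmono (hall w he hw)⟩
    exacts [Or.inl hv, Or.inr hv]

variable {A X σ T}

lemma subset_attrIn : T ⊆ AttrIn A X σ T := fun _ hv => mem_sInter.2 fun _ hW => hW.1 hv

lemma mem_attrIn_of_mem_P {u w : α} (hu : u ∈ X ∩ A.P σ) (hw : w ∈ AttrIn A X σ T ∩ X)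
    (he : (u, w) ∈ A.E) : u ∈ AttrIn A X σ T :=
  mem_sInter.2 fun W hW => hW.2.1 u hu ⟨w, ⟨mem_sInter.1 hw.1 W hW, hw.2⟩, he⟩

lemma mem_attrIn_of_mem_P_one_sub {u : α} (hu : u ∈ X ∩ A.P (1 - σ))
    (h : ∀ w, (u, w) ∈ A.E → w ∈ X → w ∈ AttrIn A X σ T) : u ∈ AttrIn A X σ T :=
  mem_sInter.2 fun W hW => hW.2.2 u hu fun w he hw => mem_sInter.1 (h w he hw) W hW

lemma attrIter_subset_attrIn : ∀ n, attrIter A X σ T n ⊆ AttrIn A X σ T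
  | 0 => subset_attrIn
  | n + 1 => by
    rintro u ((hu | ⟨hu, w, hw, he⟩) | ⟨hu, hall⟩)
    · exact attrIter_subset_attrIn n hu
    · exact mem_attrIn_of_mem_P hu ⟨attrIter_subset_attrIn n hw.1, hw.2⟩ he
    · exact mem_attrIn_of_mem_P_one_sub hu fun w he hw => attrIter_subset_attrIn n (hall w he hw)

lemma attrIn_eq_iUnion_attrIter : AttrIn A X σ T = ⋃ n, attrIter A X σ T n := by
  refine subset_antisymm (sInter_subset_of_mem ⟨fun v hv => mem_iUnion.2 ⟨0, hv⟩, ?_, ?_⟩)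
    (iUnion_subset attrIter_subset_attrIn)
  · rintro u hu ⟨w, ⟨hw, hwX⟩, he⟩
    obtain ⟨n, hn⟩ := mem_iUnion.1 hw
    exact mem_iUnion.2 ⟨n + 1, Or.inl (Or.inr ⟨hu, w, ⟨hn, hwX⟩, he⟩)⟩
  · intro u hu hall
    -- `u` has finitely many successors, so a single stage contains all of them.
    have hstage : ∀ w, ∃ n, (u, w) ∈ A.E → w ∈ X → w ∈ attrIter A X σ T n := fun w => by
      by_cases h : (u, w) ∈ A.E ∧ w ∈ X
      · obtain ⟨n, hn⟩ := mem_iUnion.1 (hall w h.1 h.2)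
        exact ⟨n, fun _ _ => hn⟩
      · exact ⟨0, fun he hw => absurd ⟨he, hw⟩ h⟩
    choose g hg using hstage
    exact mem_iUnion.2 ⟨Finset.univ.sup g + 1, Or.inr ⟨hu, fun w he hw =>
      monotone_attrIter A X σ T (Finset.le_sup (Finset.mem_univ w)) (hg w he hw)⟩⟩

lemma trapIn_diff_attrIn : TrapIn A X σ (X \ AttrIn A X σ T) := by
  refine ⟨sdiff_subset, fun v hv => ?_, fun v hv u he hu =>
    ⟨hu, fun huZ => hv.1.2 (mem_attrIn_of_mem_P ⟨hv.1.1, hv.2⟩ ⟨huZ, hu⟩ he)⟩⟩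
  by_contra! h
  exact hv.1.2 (mem_attrIn_of_mem_P_one_sub ⟨hv.1.1, hv.2⟩ fun w he hw =>
    by_contra fun hwZ => h w ⟨hw, hwZ⟩ he)

variable (A X σ T) in
def IsAttractorMove (f : α → α) : Prop :=
  (∀ v ∈ X ∩ A.P σ, (v, f v) ∈ A.E ∧ f v ∈ X) ∧
    ∀ n v, v ∈ attrIter A X σ T (n + 1) → v ∉ T → v ∈ A.P σ → f v ∈ attrIter A X σ T n

lemma exists_isAttractorMove (hX : Subarena A X) : ∃ f, IsAttractorMove A X σ T f := by
  classical
  have key : ∀ v, ∃ w, (v ∈ X ∩ A.P σ → (v, w) ∈ A.E ∧ w ∈ X) ∧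
      ∀ n, v ∈ attrIter A X σ T (n + 1) → v ∉ T → v ∈ A.P σ → w ∈ attrIter A X σ T n := by
    intro v
    by_cases hattr : v ∈ A.P σ ∧ v ∉ T ∧ ∃ n, v ∈ attrIter A X σ T (n + 1)
    · obtain ⟨hvσ, hvT, hex⟩ := hattr
      -- a successor one stage below the first stage containing `v` serves every later stage
      obtain ⟨-, w, ⟨hw, hwX⟩, he⟩ :=
        (attrIter_succ_cases A X σ T (Nat.find_spec hex) hvT).resolve_right
          fun h => disjoint_left.1 (A.disjoint_P_one_sub σ) hvσ h.1.2
      exact ⟨w, fun _ => ⟨he, hwX⟩, fun n hn _ _ =>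
        monotone_attrIter A X σ T (Nat.find_min' hex hn) hw⟩
    · have hnot : ∀ n, v ∈ attrIter A X σ T (n + 1) → v ∉ T → v ∈ A.P σ → False :=
        fun n hn hvT hvσ => hattr ⟨hvσ, hvT, n, hn⟩
      by_cases hvX : v ∈ X
      · obtain ⟨w, hwX, he⟩ := hX.2 v hvX
        exact ⟨w, fun _ => ⟨he, hwX⟩, fun n hn hvT hvσ => (hnot n hn hvT hvσ).elim⟩
      · exact ⟨v, fun h => absurd h.1 hvX, fun n hn hvT hvσ => (hnot n hn hvT hvσ).elim⟩
  choose f hf using key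
  exact ⟨f, fun v hv => (hf v).1 hv, fun n v => (hf v).2 n⟩

lemma IsAttractorMove.exists_add_mem {f : α → α} (hf : IsAttractorMove A X σ T f)
    {ρ : ℕ → α} (hρ : IsPlayIn A X ρ)
    (hfol : ∀ j, ρ j ∈ AttrIn A X σ T ∩ A.P σ → ρ (j + 1) = f (ρ j)) (n : ℕ) :
    ∀ j, ρ j ∈ attrIter A X σ T n → ∃ m, ρ (j + m) ∈ T := by
  induction n with
  | zero => exact fun j hj => ⟨0, hj⟩
  | succ n ih =>
    intro j hj
    by_cases hT : ρ j ∈ T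
    · exact ⟨0, hT⟩
    have hnext : ρ (j + 1) ∈ attrIter A X σ T n := by
      rcases attrIter_succ_cases A X σ T hj hT with ⟨⟨-, hσ⟩, -⟩ | ⟨-, hall⟩
      · rw [hfol j ⟨attrIter_subset_attrIn _ hj, hσ⟩]
        exact hf.2 n _ hj hT hσ
      · exact hall _ (hρ j).2 (hρ (j + 1)).1
    obtain ⟨m, hm⟩ := ih (j + 1) hnext
    exact ⟨m + 1, by rwa [← add_assoc, add_right_comm]⟩

lemma IsAttractorMove.frequently_mem {f : α → α} (hf : IsAttractorMove A X σ T f)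
    {ρ : ℕ → α} (hρ : IsPlayIn A X ρ)
    (hfol : ∀ j, ρ j ∈ AttrIn A X σ T ∩ A.P σ → ρ (j + 1) = f (ρ j))
    (h : ∃ᶠ j in atTop, ρ j ∈ AttrIn A X σ T) : ∃ᶠ j in atTop, ρ j ∈ T := by
  rw [frequently_atTop] at h ⊢
  intro N
  obtain ⟨j, hjN, hj⟩ := h N
  rw [attrIn_eq_iUnion_attrIter, mem_iUnion] at hj
  obtain ⟨n, hn⟩ := hj
  obtain ⟨m, hm⟩ := hf.exists_add_mem hρ hfol n j hn
  exact ⟨j + m, by omega, hm⟩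

end Attractor

theorem fullyWins_of_fullyWins_diff_attrIn {A : Arena α} {X T : Set α}
    {payoff : (ℕ → α) → Prop} (hX : Subarena A X)
    (hshift : ∀ ρ N, payoff (fun t => ρ (N + t)) → payoff ρ)
    (hT : ∀ ρ, IsPlayIn A X ρ → (∃ᶠ j in atTop, ρ j ∈ T) → payoff ρ)
    (hY : FullyWins A (X \ AttrIn A X 0 T) payoff 0) : FullyWins A X payoff 0 := by
  classical
  set Z := AttrIn A X 0 T
  obtain ⟨s, hs⟩ := hY.exists_strategyIn (trapIn_diff_attrIn.subarena hX)
  obtain ⟨f, hf⟩ := exists_isAttractorMove (σ := 0) (T := T) hX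
  intro v _
  refine ⟨StrategyIn.glue sdiff_subset f (fun v hv => hf.1 v ⟨hv.1.1, hv.2⟩) s,
    fun ρ hρ _ hcons => if_pos rfl |>.mpr ?_⟩
  by_cases hstay : ∀ᶠ j in atTop, ρ j ∈ X \ Z
  · obtain ⟨N, hN, hentry⟩ := List.exists_rtakeWhile_ofFn_eq_nil (fun x => decide (x ∈ X \ Z)) ρ
      (hstay.mono fun _ h => decide_eq_true h)
    have hN' : ∀ j ≥ N, ρ j ∈ X \ Z := fun j hj => of_decide_eq_true (hN j hj)
    have hwin := hs (ρ N) (hN' N le_rfl) _ (fun t => ⟨hN' _ (Nat.le_add_right N t), (hρ _).2⟩)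
      rfl (hcons.glue_comp_add hN' hentry)
    exact hshift ρ N (if_pos rfl |>.mp hwin)
  · refine hT ρ hρ (hf.frequently_mem hρ (fun j hj => ?_) ?_)
    · exact (hcons j hj.2).trans (StrategyIn.glue_move_of_notMem _ fun h => h.2 hj.1)
    · exact (not_eventually.1 hstay).mono fun j hj => by_contra fun hZ => hj ⟨(hρ j).1, hZ⟩

theorem stmt19_general (A : Arena α) {k : ℕ} (pairs : Fin k → Set α × Set α)
    (X : Set α) (hX : Subarena A X)
    (hcond : ∃ i, (X ∩ (pairs i).1).Nonempty ∧ X ∩ (pairs i).2 = ∅) :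
    FullyWins A X (RabinPayoff pairs) 0 ↔
      ∀ Y, Y ⊂ X → Subarena A Y → TrapIn A X 0 Y →
        FullyWins A Y (RabinPayoff pairs) 0 := by
  refine ⟨fun h Y hYX _ hY v hv => (h v (hYX.subset hv)).of_trapIn hY, fun h => ?_⟩
  obtain ⟨i, ⟨t, htX, htU⟩, hW⟩ := hcond
  have htrap := trapIn_diff_attrIn (A := A) (X := X) (σ := 0) (T := X ∩ (pairs i).1)
  refine fullyWins_of_fullyWins_diff_attrIn hX (fun ρ N => (rabinPayoff_comp_add N).1)
    (fun ρ hρ hT => rabinPayoff_of_frequently (fun j => (hρ j).1) hW (hT.mono fun _ h => h.2))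
    (h _ ?_ (htrap.subarena hX) htrap)
  exact (ssubset_iff_of_subset sdiff_subset).2 ⟨t, htX, fun ht => ht.2 (subset_attrIn ⟨htX, htU⟩)⟩

/-- for a Rabin game `G` and a subarena `A(X)` such that some
pair `(Uᵢ, Wᵢ)` has `X ∩ Uᵢ ≠ ∅` and `X ∩ Wᵢ = ∅`, Player 0 fully wins
`G(X)` iff Player 0 fully wins `G(Y)` for every proper subarena `A(Y)` that
is a 0-trap in `G(X)`. -/
theorem stmt19 (A : Arena α) {k : ℕ} (pairs : Fin k → Set α × Set α)
    (hpairs : ∀ i, (pairs i).1 ⊆ A.V ∧ (pairs i).2 ⊆ A.V)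
    (X : Set α) (hX : Subarena A X)
    (hcond : ∃ i, (X ∩ (pairs i).1).Nonempty ∧ X ∩ (pairs i).2 = ∅) :
    FullyWins A X (RabinPayoff pairs) 0 ↔
      ∀ Y, Y ⊂ X → Subarena A Y → TrapIn A X 0 Y →
        FullyWins A Y (RabinPayoff pairs) 0 :=
  stmt19_general A pairs X hX hcond
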